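/- Identification of the marginal controlled spillover effect (Theorem 3.6, MCSE, d = 1): for every (p₀,p₁) ∈ (0,1)², the iterated mixed second partial derivative ∂²F¹/∂p∂q exists at (p₀,p₁) and equals (φ^{11}(p₀,p₁) − φ^{10}(p₀,p₁))·c(p₀,p₁); the mixed second partial derivative ∂²C/∂p∂q exists at (p₀,p₁) and equals c(p₀,p₁) > 0; consequently the ratio (∂²F¹/∂p∂q)(p₀,p₁) / (∂²C/∂p∂q)(p₀,p₁) equals the marginal controlled spillover effect MCSE^{(1)}(p₀,p₁) := φ^{11}(p₀,p₁) − φ^{10}(p₀,p₁). -/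

import Mathlib

/-!
On the open unit square, both `F¹` and `C` are rectangle integrals `∫_{(0,p]×(0,q]} g` plus a
function of `p` alone: `C` with `g = c`, and `F¹` with `g = (φ¹¹ - φ¹⁰) c` once
`1{q < V₁} = 1{V₁ ≤ 1} - 1{V₁ ≤ q}` a.s. is inserted and the disintegration identity applied. For
`g` continuous and bounded on the open square, Fubini and the fundamental theorem of calculus,
applied once in each variable, give `g (p, q)` as the iterated mixed partial derivative.
-/

open MeasureTheory Set Filter Topology
open scoped ENNReal

section Analysis

variable {α E : Type*} [NormedAddCommGroup E]

theorem ContinuousOn.integrableOn_of_norm_le [MeasurableSpace α] [TopologicalSpace α]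
    [OpensMeasurableSpace α] [SecondCountableTopologyEither α E] {μ : Measure α} {f : α → E}
    {s t : Set α} {B : ℝ} (hf : ContinuousOn f s) (hB : ∀ x ∈ s, ‖f x‖ ≤ B) (hts : t ⊆ s)
    (ht : MeasurableSet t) (hμt : μ t < ∞) : IntegrableOn f t μ :=
  .of_bound hμt ((hf.mono hts).aestronglyMeasurable ht) B
    ((ae_restrict_mem ht).mono fun x hx => hB x (hts hx))

variable {a b a' b' B : ℝ}

theorem ContinuousOn.integrableOn_Ioc_prod_Ioc {g : ℝ × ℝ → E} {p q : ℝ}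
    (hg : ContinuousOn g (Ioo a b ×ˢ Ioo a' b')) (hB : ∀ x ∈ Ioo a b ×ˢ Ioo a' b', ‖g x‖ ≤ B)
    (hp : p < b) (hq : q < b') : IntegrableOn g (Ioc a p ×ˢ Ioc a' q) :=
  hg.integrableOn_of_norm_le hB (prod_mono (Ioc_subset_Ioo_right hp) (Ioc_subset_Ioo_right hq))
    (measurableSet_Ioc.prod measurableSet_Ioc)
    ((Metric.isBounded_Ioc a p).prod (Metric.isBounded_Ioc a' q)).measure_lt_top

variable [NormedSpace ℝ E] [CompleteSpace E]

theorem hasDerivAt_intervalIntegral_of_continuousOn_Ioo {f : ℝ → E} {x : ℝ}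
    (hf : ContinuousOn f (Ioo a b)) (hB : ∀ y ∈ Ioo a b, ‖f y‖ ≤ B) (hx : x ∈ Ioo a b) :
    HasDerivAt (fun y => ∫ u in a..y, f u) (f x) x :=
  intervalIntegral.integral_hasDerivAt_right
    ((intervalIntegrable_iff_integrableOn_Ioc_of_le hx.1.le).2
      (hf.integrableOn_of_norm_le hB (Ioc_subset_Ioo_right hx.2) measurableSet_Ioc
        measure_Ioc_lt_top))
    (hf.stronglyMeasurableAtFilter isOpen_Ioo x hx) (hf.continuousAt (Ioo_mem_nhds hx.1 hx.2))

/-- Fubini writes the rectangle integral as `∫ v in a'..q, ∫ u in Ioc a p, g (u, v)`; the inner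
integral is continuous in `v` by dominated convergence, so the fundamental theorem of calculus
applies. -/
theorem hasDerivAt_setIntegral_Ioc_prod_Ioc_right {g : ℝ × ℝ → E} {p q₀ : ℝ}
    (hg : ContinuousOn g (Ioo a b ×ˢ Ioo a' b')) (hB : ∀ x ∈ Ioo a b ×ˢ Ioo a' b', ‖g x‖ ≤ B)
    (hp : p ∈ Ioo a b) (hq₀ : q₀ ∈ Ioo a' b') :
    HasDerivAt (fun q => ∫ x in Ioc a p ×ˢ Ioc a' q, g x) (∫ u in a..p, g (u, q₀)) q₀ := by
  set h : ℝ → E := fun v => ∫ u in Ioc a p, g (u, v)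
  have hmem : ∀ v ∈ Ioo a' b', ∀ u ∈ Ioc a p, (u, v) ∈ Ioo a b ×ˢ Ioo a' b' :=
    fun v hv u hu => ⟨⟨hu.1, hu.2.trans_lt hp.2⟩, hv⟩
  have hh_cont : ContinuousOn h (Ioo a' b') := by
    refine continuousOn_of_dominated (bound := fun _ => B) (fun v hv => ?_) (fun v hv => ?_)
      (integrable_const B) ((ae_restrict_mem measurableSet_Ioc).mono fun u hu => ?_)
    · exact (hg.comp (by fun_prop) (hmem v hv)).aestronglyMeasurable measurableSet_Ioc
    · exact (ae_restrict_mem measurableSet_Ioc).mono fun u hu => hB _ (hmem v hv u hu)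
    · exact hg.comp (by fun_prop) fun v hv => hmem v hv u hu
  have hh_bound : ∀ v ∈ Ioo a' b', ‖h v‖ ≤ B * volume.real (Ioc a p) := fun v hv =>
    norm_setIntegral_le_of_norm_le_const measure_Ioc_lt_top fun u hu => hB _ (hmem v hv u hu)
  have hFubini : (fun q => ∫ x in Ioc a p ×ˢ Ioc a' q, g x) =ᶠ[𝓝 q₀]
      fun q => ∫ v in a'..q, h v := by
    filter_upwards [Ioo_mem_nhds hq₀.1 hq₀.2] with q hq
    have hint := hg.integrableOn_Ioc_prod_Ioc hB hp.2 hq.2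
    rw [IntegrableOn, Measure.volume_eq_prod, ← Measure.prod_restrict] at hint
    rw [intervalIntegral.integral_of_le hq.1.le, Measure.volume_eq_prod, ← Measure.prod_restrict,
      integral_prod_symm g hint]
  rw [intervalIntegral.integral_of_le hp.1.le]
  exact (hasDerivAt_intervalIntegral_of_continuousOn_Ioo hh_cont hh_bound hq₀).congr_of_eventuallyEq
    hFubini

end Analysis

def HasMixedPartialAt (G : ℝ → ℝ → ℝ) (A p₀ q₀ : ℝ) : Prop :=
  ∃ D : ℝ → ℝ, (∀ᶠ p in 𝓝 p₀, HasDerivAt (fun q => G p q) (D p) q₀) ∧ HasDerivAt D A p₀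

theorem hasMixedPartialAt_of_eq_setIntegral_add {a b a' b' B : ℝ} {G : ℝ → ℝ → ℝ}
    {g : ℝ × ℝ → ℝ} {K : ℝ → ℝ}
    (hg : ContinuousOn g (Ioo a b ×ˢ Ioo a' b')) (hB : ∀ x ∈ Ioo a b ×ˢ Ioo a' b', ‖g x‖ ≤ B)
    (hG : ∀ p ∈ Ioo a b, ∀ q ∈ Ioo a' b', G p q = (∫ x in Ioc a p ×ˢ Ioc a' q, g x) + K p)
    {p₀ q₀ : ℝ} (hp₀ : p₀ ∈ Ioo a b) (hq₀ : q₀ ∈ Ioo a' b') :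
    HasMixedPartialAt G (g (p₀, q₀)) p₀ q₀ := by
  have hg_q₀ : ContinuousOn (fun u => g (u, q₀)) (Ioo a b) :=
    hg.comp (by fun_prop) fun u hu => ⟨hu, hq₀⟩
  refine ⟨fun p => ∫ u in a..p, g (u, q₀), ?_,
    hasDerivAt_intervalIntegral_of_continuousOn_Ioo hg_q₀ (fun u hu => hB _ ⟨hu, hq₀⟩) hp₀⟩
  filter_upwards [Ioo_mem_nhds hp₀.1 hp₀.2] with p hp
  refine ((hasDerivAt_setIntegral_Ioc_prod_Ioc_right hg hB hp hq₀).add_const (K p))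
    |>.congr_of_eventuallyEq ?_
  filter_upwards [Ioo_mem_nhds hq₀.1 hq₀.2] with q hq
  exact hG p hp q hq

section Probability

variable {Ω α : Type*} [MeasurableSpace Ω] [MeasurableSpace α] {μ : Measure Ω}

theorem measureReal_preimage_eq_setIntegral_of_map_eq_withDensity {ν : Measure α} {Z : Ω → α}
    {c : α → ℝ} (hZ : Measurable Z) (hc : Measurable c) (hc₀ : ∀ x, 0 ≤ c x)
    (hmap : μ.map Z = ν.withDensity fun x => ENNReal.ofReal (c x)) {A : Set α}
    (hA : MeasurableSet A) : μ.real (Z ⁻¹' A) = ∫ x in A, c x ∂ν := by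
  rw [measureReal_def, ← Measure.map_apply hZ hA, hmap, withDensity_apply _ hA,
    ← integral_toReal hc.ennreal_ofReal.aemeasurable (ae_of_all _ fun _ => ENNReal.ofReal_lt_top)]
  simp_rw [ENNReal.toReal_ofReal (hc₀ _)]

theorem measureReal_le_and_le_eq_setIntegral_Ioc_prod_Ioc {X Y : Ω → ℝ} {c : ℝ × ℝ → ℝ}
    {a a' : ℝ} (hX : Measurable X) (hY : Measurable Y) (hc : Measurable c) (hc₀ : ∀ x, 0 ≤ c x)
    (hmap : μ.map (fun ω => (X ω, Y ω)) = volume.withDensity fun x => ENNReal.ofReal (c x))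
    (hsupp : ∀ x ∉ Ioi a ×ˢ Ioi a', c x = 0) (p q : ℝ) :
    μ.real {ω | X ω ≤ p ∧ Y ω ≤ q} = ∫ x in Ioc a p ×ˢ Ioc a' q, c x := by
  have hA : MeasurableSet (Iic p ×ˢ Iic q) := measurableSet_Iic.prod measurableSet_Iic
  rw [show {ω | X ω ≤ p ∧ Y ω ≤ q} = (fun ω => (X ω, Y ω)) ⁻¹' (Iic p ×ˢ Iic q) from rfl,
    measureReal_preimage_eq_setIntegral_of_map_eq_withDensity (hX.prodMk hY) hc hc₀ hmap hA]
  exact setIntegral_eq_of_subset_of_forall_sdiff_eq_zero hA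
    (prod_mono Ioc_subset_Iic_self Ioc_subset_Iic_self)
    fun x hx => hsupp x fun hxa => hx.2 ⟨⟨hxa.1, hx.1.1⟩, hxa.2, hx.1.2⟩

theorem integrable_mul_ite_le [IsFiniteMeasure μ] {M X : Ω → ℝ} {B : ℝ} (hM : Measurable M)
    (hMB : ∀ ω, |M ω| ≤ B) (hX : Measurable X) (p : ℝ) :
    Integrable (fun ω => M ω * if X ω ≤ p then 1 else 0) μ :=
  .of_bound (hM.mul (Measurable.ite (measurableSet_le hX measurable_const) measurable_const
    measurable_const)).aestronglyMeasurable B (ae_of_all _ fun ω => by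
      rw [norm_mul]
      exact (mul_le_of_le_one_right (norm_nonneg _) (by split_ifs <;> simp)).trans (hMB ω))

theorem integral_mul_ite_lt_eq_sub {f Y : Ω → ℝ} {r : ℝ} (hf : Integrable f μ) (hY : Measurable Y)
    (hYr : ∀ᵐ ω ∂μ, Y ω ≤ r) (q : ℝ) :
    ∫ ω, f ω * (if q < Y ω then 1 else 0) ∂μ =
      (∫ ω, f ω * (if Y ω ≤ r then 1 else 0) ∂μ) - ∫ ω, f ω * (if Y ω ≤ q then 1 else 0) ∂μ := by
  have hint : ∀ s, Integrable (fun ω => f ω * (if Y ω ≤ s then (1 : ℝ) else 0)) μ := fun s =>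
    hf.mul_bdd (Measurable.ite (measurableSet_le hY measurable_const) measurable_const
      measurable_const).aestronglyMeasurable (c := 1) (ae_of_all _ fun ω => by split_ifs <;> simp)
  rw [← integral_sub (hint r) (hint q)]
  refine integral_congr_ae (hYr.mono fun ω hω => ?_)
  by_cases hq : Y ω ≤ q
  · simp [hq, hω, not_lt.2 hq]
  · simp [hq, hω, not_le.1 hq]

end Probability

theorem mcse_identification
    {Ω 𝒰 : Type*} [MeasurableSpace Ω] [MeasurableSpace 𝒰]
    (μ : Measure Ω) [IsProbabilityMeasure μ]
    (U : Ω → 𝒰) (V₀ V₁ : Ω → ℝ)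
    (hU : Measurable U) (hV₀ : Measurable V₀) (hV₁ : Measurable V₁)
    -- V₀, V₁ uniformly distributed on (0,1)
    (hV₁unif : Measure.map V₁ μ = volume.restrict (Set.Ioo (0:ℝ) 1))
    -- bounded measurable outcome function (`true` codes treatment 1, `false` codes 0)
    (m : Bool → Bool → 𝒰 → ℝ) (hm : ∀ d d', Measurable (m d d'))
    (hm_bdd : ∃ B, ∀ d d' u, |m d d' u| ≤ B)
    -- the joint law of (V₀,V₁) has density c w.r.t. 2-dimensional Lebesgue measure,
    -- concentrated on (0,1)², continuous, bounded above and away from zero there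
    (c : ℝ × ℝ → ℝ) (hc_meas : Measurable c) (hc_nonneg : ∀ x, 0 ≤ c x)
    (hc_density : Measure.map (fun ω => (V₀ ω, V₁ ω)) μ
      = volume.withDensity fun x => ENNReal.ofReal (c x))
    (hc_supp : ∀ x : ℝ × ℝ, x ∉ Set.Ioo (0:ℝ) 1 ×ˢ Set.Ioo (0:ℝ) 1 → c x = 0)
    (hc_cont : ContinuousOn c (Set.Ioo (0:ℝ) 1 ×ˢ Set.Ioo (0:ℝ) 1))
    (hc_bdd : ∃ B, ∀ x ∈ Set.Ioo (0:ℝ) 1 ×ˢ Set.Ioo (0:ℝ) 1, c x ≤ B)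
    (hc_pos : ∃ ε > (0:ℝ), ∀ x ∈ Set.Ioo (0:ℝ) 1 ×ˢ Set.Ioo (0:ℝ) 1, ε ≤ c x)
    -- continuous bounded marginal treatment response functions φ^{dd'}
    (φ : Bool → Bool → ℝ × ℝ → ℝ)
    (hφ_cont : ∀ d d', ContinuousOn (φ d d') (Set.Ioo (0:ℝ) 1 ×ˢ Set.Ioo (0:ℝ) 1))
    (hφ_bdd : ∃ B, ∀ d d' x, |φ d d' x| ≤ B)
    (hφ_disint : ∀ d d', ∀ p ∈ Set.Ioc (0:ℝ) 1, ∀ q ∈ Set.Ioc (0:ℝ) 1,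
      (∫ ω, m d d' (U ω) * (if V₀ ω ≤ p then (1:ℝ) else 0)
        * (if V₁ ω ≤ q then (1:ℝ) else 0) ∂μ)
      = ∫ x in Set.Ioc (0:ℝ) p ×ˢ Set.Ioc (0:ℝ) q, φ d d' x * c x)
    -- the copula of (V₀, V₁)
    (C : ℝ → ℝ → ℝ)
    (hC : ∀ p q, C p q = (μ {ω | V₀ ω ≤ p ∧ V₁ ω ≤ q}).toReal)
    -- identified conditional-mean function F¹
    (F1 : ℝ → ℝ → ℝ)
    (hF1 : ∀ p q, F1 p q =
      (∫ ω, m true true (U ω) * (if V₀ ω ≤ p then (1:ℝ) else 0)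
        * (if V₁ ω ≤ q then (1:ℝ) else 0) ∂μ)
      + ∫ ω, m true false (U ω) * (if V₀ ω ≤ p then (1:ℝ) else 0)
        * (if q < V₁ ω then (1:ℝ) else 0) ∂μ)
    -- the evaluation point
    (p₀ p₁ : ℝ) (hp₀ : p₀ ∈ Set.Ioo (0:ℝ) 1) (hp₁ : p₁ ∈ Set.Ioo (0:ℝ) 1) :
    ∃ A B : ℝ,
      -- the iterated mixed second partial derivative of F¹ at (p₀,p₁) exists and equals A
      (∃ DFq : ℝ → ℝ,
        (∀ᶠ p in nhds p₀, HasDerivAt (fun q => F1 p q) (DFq p) p₁) ∧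
        HasDerivAt DFq A p₀) ∧
      -- the iterated mixed second partial derivative of C at (p₀,p₁) exists and equals B
      (∃ DCq : ℝ → ℝ,
        (∀ᶠ p in nhds p₀, HasDerivAt (fun q => C p q) (DCq p) p₁) ∧
        HasDerivAt DCq B p₀) ∧
      A = (φ true true (p₀, p₁) - φ true false (p₀, p₁)) * c (p₀, p₁) ∧
      B = c (p₀, p₁) ∧ 0 < B ∧
      A / B = φ true true (p₀, p₁) - φ true false (p₀, p₁) := by
  obtain ⟨Bm, hBm⟩ := hm_bdd
  obtain ⟨Bc, hBc⟩ := hc_bdd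
  obtain ⟨Bφ, hBφ⟩ := hφ_bdd
  obtain ⟨ε, hε, hεc⟩ := hc_pos
  set S := Ioo (0:ℝ) 1 ×ˢ Ioo (0:ℝ) 1
  have hc_norm : ∀ x ∈ S, ‖c x‖ ≤ Bc := fun x hx =>
    (Real.norm_of_nonneg (hc_nonneg x)).trans_le (hBc x hx)
  have hφc_cont : ∀ d d', ContinuousOn (fun x => φ d d' x * c x) S :=
    fun d d' => (hφ_cont d d').mul hc_cont
  have hφc_norm : ∀ d d', ∀ x ∈ S, ‖φ d d' x * c x‖ ≤ Bφ * Bc :=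
    fun d d' x hx => (norm_mul _ _).trans_le <|
      mul_le_mul (hBφ d d' x) (hc_norm x hx) (norm_nonneg _) ((abs_nonneg _).trans (hBφ d d' x))
  have hV₁_le_one : ∀ᵐ ω ∂μ, V₁ ω ≤ 1 := ae_of_ae_map hV₁.aemeasurable
    (hV₁unif ▸ (ae_restrict_mem measurableSet_Ioo).mono fun v hv => hv.2.le)
  have hC_rect : ∀ p ∈ Ioo (0:ℝ) 1, ∀ q ∈ Ioo (0:ℝ) 1,
      C p q = (∫ x in Ioc 0 p ×ˢ Ioc 0 q, c x) + 0 := fun p _ q _ => by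
    rw [add_zero, hC, ← measureReal_def, measureReal_le_and_le_eq_setIntegral_Ioc_prod_Ioc hV₀ hV₁
      hc_meas hc_nonneg hc_density fun x hx => hc_supp x fun hxS => hx ⟨hxS.1.1, hxS.2.1⟩]
  have hF1_rect : ∀ p ∈ Ioo (0:ℝ) 1, ∀ q ∈ Ioo (0:ℝ) 1, F1 p q =
      (∫ x in Ioc 0 p ×ˢ Ioc 0 q, φ true true x * c x - φ true false x * c x)
        + ∫ x in Ioc 0 p ×ˢ Ioc 0 1, φ true false x * c x := fun p hp q hq => by
    have hpI : p ∈ Ioc (0:ℝ) 1 := Ioo_subset_Ioc_self hp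
    have hqI : q ∈ Ioc (0:ℝ) 1 := Ioo_subset_Ioc_self hq
    rw [hF1, integral_mul_ite_lt_eq_sub (integrable_mul_ite_le (M := fun ω => m true false (U ω))
        ((hm true false).comp hU) (fun ω => hBm _ _ _) hV₀ p) hV₁ hV₁_le_one,
      hφ_disint true true p hpI q hqI, hφ_disint true false p hpI 1 (right_mem_Ioc.2 one_pos),
      hφ_disint true false p hpI q hqI,
      integral_sub ((hφc_cont true true).integrableOn_Ioc_prod_Ioc (hφc_norm true true) hp.2 hq.2)
        ((hφc_cont true false).integrableOn_Ioc_prod_Ioc (hφc_norm true false) hp.2 hq.2)]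
    ring
  have hcpos : 0 < c (p₀, p₁) := hε.trans_le (hεc _ ⟨hp₀, hp₁⟩)
  refine ⟨_, _, hasMixedPartialAt_of_eq_setIntegral_add
      (g := fun x => φ true true x * c x - φ true false x * c x)
      ((hφc_cont true true).sub (hφc_cont true false)) (fun x hx => (norm_sub_le _ _).trans
        (add_le_add (hφc_norm true true x hx) (hφc_norm true false x hx))) hF1_rect hp₀ hp₁,
    hasMixedPartialAt_of_eq_setIntegral_add hc_cont hc_norm hC_rect hp₀ hp₁,
    by ring, rfl, hcpos, (div_eq_iff hcpos.ne').2 (by ring)⟩
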